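/- Let M be a right R-module and 0 → A → B → C → 0 an exact sequence with A and C finitely M-generated. If the epimorphism B → C is an M-pure epimorphism, then B is finitely M-generated. -/
import Mathlib


/-- A module is Rickart if the kernel of every endomorphism is a direct summand. -/
def IsRickart (R M : Type*) [Ring R] [AddCommGroup M] [Module R M] : Prop :=
  ∀ φ : M →ₗ[R] M, ∃ N : Submodule R M, IsCompl (LinearMap.ker φ) N

/-- A module is finite Σ-Rickart if `M^(n)` is Rickart for every `n > 0`. -/
def IsFinSigmaRickart (R M : Type*) [Ring R] [AddCommGroup M] [Module R M] : Prop :=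
  ∀ n : ℕ, 0 < n → IsRickart R (Fin n → M)

/-- `N` is finitely `M`-generated if there is an epimorphism `M^(n) → N` for some `n > 0`. -/
def FinMGen (R M N : Type*) [Ring R] [AddCommGroup M] [Module R M]
    [AddCommGroup N] [Module R N] : Prop :=
  ∃ n : ℕ, 0 < n ∧ ∃ f : (Fin n → M) →ₗ[R] N, Function.Surjective f


/-- An epimorphism `μ` is `M`-pure if every homomorphism from `M` to its codomain
factors through `μ`. -/
def MPure (R M : Type*) {X Y : Type*} [Ring R] [AddCommGroup M] [Module R M]
    [AddCommGroup X] [Module R X] [AddCommGroup Y] [Module R Y]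
    (μ : X →ₗ[R] Y) : Prop :=
  ∀ f : M →ₗ[R] Y, ∃ g : M →ₗ[R] X, μ.comp g = f


/-- If `0 → A → B → C → 0` is exact with `A`, `C` finitely `M`-generated and the
epimorphism `B → C` is `M`-pure, then `B` is finitely `M`-generated. -/
theorem stmt12 {R M A B C : Type*} [Ring R] [AddCommGroup M] [Module R M]
    [AddCommGroup A] [Module R A] [AddCommGroup B] [Module R B]
    [AddCommGroup C] [Module R C]
    (α : A →ₗ[R] B) (β : B →ₗ[R] C) (hα : Function.Injective α)
    (hβ : Function.Surjective β) (hex : Function.Exact α β)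
    (hA : FinMGen R M A) (hC : FinMGen R M C) (hpure : MPure R M β) :
    FinMGen R M B := by
  obtain ⟨m, hm, h, hh⟩ := hA
  obtain ⟨n, hn, f, hf⟩ := hC
  -- lift f : (Fin n → M) → C to g : (Fin n → M) → B
  choose gi hgi using fun i : Fin n => hpure (f.comp (LinearMap.single R (fun _ => M) i))
  set g : (Fin n → M) →ₗ[R] B := ∑ i : Fin n, (gi i).comp (LinearMap.proj i) with hg
  have hβg : β.comp g = f := by
    refine LinearMap.ext fun x => ?_
    simp only [hg, LinearMap.coe_sum, Finset.sum_apply, LinearMap.comp_apply,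
      LinearMap.proj_apply, map_sum]
    have : ∀ i : Fin n, β ((gi i) (x i)) = f (Pi.single i (x i)) := by
      intro i
      have := congrArg (fun φ => φ (x i)) (hgi i)
      simpa using this
    rw [Finset.sum_congr rfl fun i _ => this i, ← map_sum]
    congr 1
    ext j
    simp [Finset.sum_apply, Pi.single_apply]
  refine ⟨m + n, by omega, ?_⟩
  refine ⟨(α.comp h).comp (LinearMap.funLeft R M (Fin.castAdd n)) +
    g.comp (LinearMap.funLeft R M (Fin.natAdd m)), ?_⟩
  intro b
  obtain ⟨y, hy⟩ := hf (β b)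
  have hker : β (b - g y) = 0 := by
    have : β (g y) = f y := congrArg (fun φ => φ y) hβg
    simp [map_sub, this, hy]
  obtain ⟨a, ha⟩ := (hex (b - g y)).mp hker
  obtain ⟨x, hx⟩ := hh a
  refine ⟨Fin.append x y, ?_⟩
  have h1 : (LinearMap.funLeft R M (Fin.castAdd n)) (Fin.append x y) = x := by
    funext i; simp [LinearMap.funLeft_apply]
  have h2 : (LinearMap.funLeft R M (Fin.natAdd m)) (Fin.append x y) = y := by
    funext i; simp [LinearMap.funLeft_apply]
  simp only [LinearMap.add_apply, LinearMap.comp_apply, h1, h2, hx, ha]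
  exact sub_add_cancel b (g y)
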